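/- arXiv:1402.2876 — 8 statements merged into one kernel-verified Lean document; each statement's English description precedes it below -/
import Mathlib

section
/- For a continuous function F : ℝ → ℝ with suitable decay (e.g., F bounded and continuous on [0,∞)), and s > 0, the Laplace transform of t ↦ t·F(t²) satisfies ∫₀^∞ e^(−s·t) · t · F(t²) dt = (s / (4√π)) · ∫₀^∞ e^(−s²/(4u)) · u^(−3/2) · f(u) du, where f(u) = ∫₀^∞ e^(−u·z) F(z) dz is the Laplace transform of F. -/
/-!
Insert `f u = ∫ e^{-uz} F z dz` into the `u`-integral and swap the order of integration (the
integrand is dominated by `M` times a positive kernel whose iterated integral is finite). The inner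
integral is the Laplace transform of the Lévy kernel,
`∫₀^∞ e^{-s²/4u} u^{-3/2} e^{-uz} du = (2√π / s) e^{-s√z}`, which the substitution `u = y⁻²`
reduces to `∫₀^∞ exp (-(a y)² - (c / y)²) dy = √π / (2a) · e^{-2ac}`; that integral is computed by
Cauchy–Schlömilch: `x = y - c / y` maps `(0, ∞)` onto `ℝ` with `dx = (1 + c / y²) dy`, and the
symmetry `y ↦ c / y` shows that the two halves of `(1 + c / y²) dy` contribute equally. Finally
`z = t²` turns `∫ e^{-s√z} F z dz` into `2 ∫ e^{-st} t F (t²) dt`.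
-/

open MeasureTheory Real Set

theorem integral_one_add_div_sq_smul_comp_sub_div_Ioi {E : Type*} [NormedAddCommGroup E]
    [NormedSpace ℝ E] (g : ℝ → E) {c : ℝ} (hc : 0 < c) :
    ∫ y in Ioi 0, (1 + c / y ^ 2) • g (y - c / y) = ∫ x, g x := by
  have hderiv : ∀ y ∈ Ioi (0 : ℝ),
      HasDerivWithinAt (fun y => y - c / y) (1 + c / y ^ 2) (Ioi 0) y := fun y hy =>
    ((hasDerivAt_id y).sub ((hasDerivAt_inv (ne_of_gt hy)).const_mul c) |>.congr_deriv
      (by ring)).hasDerivWithinAt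
  have hinj : InjOn (fun y => y - c / y) (Ioi 0) := by
    intro a (ha : 0 < a) b (hb : 0 < b) h
    have : (a - b) * (a * b + c) = 0 := by field_simp at h; linear_combination h
    have : 0 < a * b + c := by positivity
    nlinarith
  have himage : (fun y => y - c / y) '' Ioi 0 = univ := by
    refine eq_univ_of_forall fun x => ?_
    have hr : 0 ≤ x ^ 2 + 4 * c := by positivity
    have hx : |x| < √(x ^ 2 + 4 * c) := by
      rw [← sqrt_sq_eq_abs]; exact sqrt_lt_sqrt (sq_nonneg x) (by linarith)
    have hy : 0 < x + √(x ^ 2 + 4 * c) := by linarith [neg_abs_le x]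
    refine ⟨_, half_pos hy, ?_⟩
    field_simp
    nlinarith [sq_sqrt hr]
  have h := integral_image_eq_integral_abs_deriv_smul measurableSet_Ioi hderiv hinj g
  rw [himage, Measure.restrict_univ] at h
  rw [h]
  refine setIntegral_congr_fun measurableSet_Ioi fun y hy => ?_
  have : 0 < y := hy
  rw [abs_of_pos (by positivity)]

theorem integral_div_sq_smul_comp_div_Ioi {E : Type*} [NormedAddCommGroup E]
    [NormedSpace ℝ E] (g : ℝ → E) {c : ℝ} (hc : 0 < c) :
    ∫ y in Ioi 0, (c / y ^ 2) • g (c / y) = ∫ x in Ioi 0, g x := by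
  have hderiv : ∀ y ∈ Ioi (0 : ℝ), HasDerivWithinAt (fun y => c / y) (-c / y ^ 2) (Ioi 0) y :=
    fun y hy =>
      ((hasDerivAt_inv (ne_of_gt hy)).const_mul c |>.congr_deriv (by ring)).hasDerivWithinAt
  have hinj : InjOn (fun y => c / y) (Ioi 0) := fun a _ b _ h =>
    inv_injective (mul_left_cancel₀ hc.ne' h)
  have himage : (fun y => c / y) '' Ioi 0 = Ioi 0 := by
    ext x
    refine ⟨fun ⟨y, (hy : 0 < y), hxy⟩ => hxy ▸ div_pos hc hy, fun (hx : 0 < x) => ?_⟩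
    exact ⟨c / x, div_pos hc hx, div_div_cancel₀ hc.ne'⟩
  have h := integral_image_eq_integral_abs_deriv_smul measurableSet_Ioi hderiv hinj g
  rw [himage] at h
  rw [h]
  refine setIntegral_congr_fun measurableSet_Ioi fun y hy => ?_
  have : 0 < y := hy
  rw [neg_div, abs_neg, abs_of_pos (by positivity)]

theorem integral_exp_neg_sub_div_sq_Ioi {c : ℝ} (hc : 0 < c) :
    ∫ y in Ioi 0, exp (-(y - c / y) ^ 2) = √π / 2 := by
  set e : ℝ → ℝ := fun y => exp (-(y - c / y) ^ 2)
  have hsum : ∫ y in Ioi 0, (1 + c / y ^ 2) * e y = √π := by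
    have h := integral_one_add_div_sq_smul_comp_sub_div_Ioi (fun x => exp (-x ^ 2)) hc
    simp only [smul_eq_mul] at h
    exact h.trans (by simpa using integral_gaussian 1)
  have hsum_int : IntegrableOn (fun y => (1 + c / y ^ 2) * e y) (Ioi 0) :=
    Integrable.of_integral_ne_zero (by rw [hsum]; positivity)
  have he_le : ∀ y ∈ Ioi (0 : ℝ), ‖e y‖ ≤ ‖(1 + c / y ^ 2) * e y‖ :=
    fun y (hy : 0 < y) => by
      have : 0 < e y := exp_pos _
      rw [norm_of_nonneg this.le, norm_of_nonneg (by positivity)]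
      nlinarith [div_pos hc (pow_pos hy 2)]
  have he_int : IntegrableOn e (Ioi 0) :=
    Integrable.mono hsum_int (by fun_prop) (ae_restrict_of_forall_mem measurableSet_Ioi he_le)
  have hdiv_int : IntegrableOn (fun y => c / y ^ 2 * e y) (Ioi 0) :=
    (hsum_int.sub he_int).congr (ae_of_all _ fun y => by simp only [Pi.sub_apply]; ring)
  have hreflect : ∫ y in Ioi 0, c / y ^ 2 * e y = ∫ y in Ioi 0, e y := by
    rw [← integral_div_sq_smul_comp_div_Ioi e hc]
    refine setIntegral_congr_fun measurableSet_Ioi fun y hy => ?_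
    have : c / (c / y) = y := div_div_cancel₀ hc.ne'
    simp only [e, smul_eq_mul, this]
    ring_nf
  have : ∫ y in Ioi 0, (1 + c / y ^ 2) * e y = 2 * ∫ y in Ioi 0, e y := by
    rw [two_mul]
    nth_rw 2 [← hreflect]
    rw [← integral_add he_int hdiv_int]
    simp only [add_mul, one_mul]
  linarith

theorem integral_exp_neg_mul_sq_sub_div_sq_Ioi {a c : ℝ} (ha : 0 < a) (hc : 0 < c) :
    ∫ y in Ioi 0, exp (-(a * y) ^ 2 - (c / y) ^ 2) = √π / (2 * a) * exp (-2 * (a * c)) := by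
  have hcomplete : ∀ y ∈ Ioi (0 : ℝ), exp (-(a * y) ^ 2 - (c / y) ^ 2)
      = exp (-(a * y - a * c / (a * y)) ^ 2) * exp (-2 * (a * c)) := fun y (hy : 0 < y) => by
    rw [← exp_add]
    congr 1
    field_simp
    ring
  rw [setIntegral_congr_fun measurableSet_Ioi hcomplete, integral_mul_const,
    integral_comp_mul_left_Ioi (fun w => exp (-(w - a * c / w) ^ 2)) 0 ha, mul_zero,
    integral_exp_neg_sub_div_sq_Ioi (by positivity), smul_eq_mul]
  field_simp

theorem integral_levy_kernel_mul_exp_neg_mul_Ioi {s z : ℝ} (hs : 0 < s) (hz : 0 < z) :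
    ∫ u in Ioi 0, exp (-s ^ 2 / (4 * u)) * u ^ (-(3 : ℝ) / 2) * exp (-u * z)
      = 2 * √π / s * exp (-s * √z) := by
  rw [← integral_comp_rpow_Ioi _ (by norm_num : (-2 : ℝ) ≠ 0)]
  have hsubst : ∀ x ∈ Ioi (0 : ℝ), (|(-2 : ℝ)| * x ^ ((-2 : ℝ) - 1)) •
      (exp (-s ^ 2 / (4 * x ^ (-2 : ℝ))) * (x ^ (-2 : ℝ)) ^ (-(3 : ℝ) / 2)
        * exp (-x ^ (-2 : ℝ) * z))
      = 2 * exp (-(s / 2 * x) ^ 2 - (√z / x) ^ 2) := fun x (hx : 0 < x) => by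
    have h2 : x ^ (-2 : ℝ) = (x ^ 2)⁻¹ := by rw [rpow_neg hx.le, rpow_two]
    have h3 : (x ^ (-2 : ℝ)) ^ (-(3 : ℝ) / 2) = x ^ 3 := by
      rw [← rpow_mul hx.le, ← rpow_natCast]; norm_num
    have h3' : x ^ ((-2 : ℝ) - 1) = (x ^ 3)⁻¹ := by
      rw [← rpow_natCast, ← rpow_neg hx.le]; norm_num
    rw [h3, h3', h2, abs_neg, abs_two, smul_eq_mul, div_pow, sq_sqrt hz.le, mul_assoc,
      mul_comm (exp _), mul_assoc, ← exp_add]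
    field_simp
    ring_nf
  rw [setIntegral_congr_fun measurableSet_Ioi hsubst, integral_const_mul,
    integral_exp_neg_mul_sq_sub_div_sq_Ioi (by positivity) (sqrt_pos.2 hz)]
  field_simp

theorem integral_two_mul_smul_comp_sq_Ioi {E : Type*} [NormedAddCommGroup E] [NormedSpace ℝ E]
    (g : ℝ → E) : ∫ t in Ioi 0, (2 * t) • g (t ^ 2) = ∫ z in Ioi 0, g z := by
  rw [← integral_comp_rpow_Ioi_of_pos (g := g) two_pos]
  refine setIntegral_congr_fun measurableSet_Ioi fun t _ => ?_
  norm_num [rpow_two]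

theorem integrableOn_exp_neg_mul_sqrt_Ioi {s : ℝ} (hs : 0 < s) :
    IntegrableOn (fun z => exp (-s * √z)) (Ioi 0) := by
  refine (integrableOn_rpow_mul_exp_neg_mul_rpow (s := 0) (by norm_num) one_half_pos hs
    |>.congr_fun (fun z _ => ?_) measurableSet_Ioi)
  simp only [rpow_zero, one_mul, sqrt_eq_rpow]

theorem integrable_levy_kernel_mul_exp_neg_mul_mul {F : ℝ → ℝ} {M s : ℝ} (hF : Continuous F)
    (hFb : ∀ t ≥ (0 : ℝ), |F t| ≤ M) (hs : 0 < s) :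
    Integrable (Function.uncurry fun u z =>
        exp (-s ^ 2 / (4 * u)) * u ^ (-(3 : ℝ) / 2) * (exp (-u * z) * F z))
      ((volume.restrict (Ioi 0)).prod (volume.restrict (Ioi 0))) := by
  have hmeas : Measurable F := hF.measurable
  rw [integrable_prod_iff' (by unfold Function.uncurry; fun_prop)]
  constructor
  · filter_upwards [ae_restrict_mem measurableSet_Ioi] with z (hz : 0 < z)
    have hkernel : IntegrableOn
        (fun u => exp (-s ^ 2 / (4 * u)) * u ^ (-(3 : ℝ) / 2) * exp (-u * z)) (Ioi 0) :=
      Integrable.of_integral_ne_zero <| by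
        rw [integral_levy_kernel_mul_exp_neg_mul_Ioi hs hz]
        positivity
    exact (hkernel.mul_const (F z)).congr (ae_of_all _ fun u => by simp only [mul_assoc]; rfl)
  · have hnorm : ∀ z ∈ Ioi (0 : ℝ), ∫ u in Ioi 0,
          ‖exp (-s ^ 2 / (4 * u)) * u ^ (-(3 : ℝ) / 2) * (exp (-u * z) * F z)‖
        = 2 * √π / s * exp (-s * √z) * |F z| := fun z (hz : 0 < z) => by
      rw [← integral_levy_kernel_mul_exp_neg_mul_Ioi hs hz, ← integral_mul_const]
      refine setIntegral_congr_fun measurableSet_Ioi fun u (hu : 0 < u) => ?_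
      simp only [norm_mul, norm_eq_abs, abs_exp, abs_of_pos (rpow_pos_of_pos hu _)]
      ring
    refine Integrable.congr ?_
      ((ae_restrict_of_forall_mem measurableSet_Ioi hnorm).mono fun z hz => hz.symm)
    refine ((integrableOn_exp_neg_mul_sqrt_Ioi hs).const_mul _).mul_bdd (c := M)
      (by fun_prop) ?_
    filter_upwards [ae_restrict_mem measurableSet_Ioi] with z (hz : 0 < z)
    rw [norm_abs_eq_norm, norm_eq_abs]
    exact hFb z hz.le

theorem stmt_0 (F : ℝ → ℝ) (hF : Continuous F) (M : ℝ)
    (hFb : ∀ t ≥ (0:ℝ), |F t| ≤ M) (s : ℝ) (hs : 0 < s) :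
    ∫ t in Set.Ioi (0:ℝ), Real.exp (-s * t) * t * F (t ^ 2)
      = (s / (4 * Real.sqrt π)) *
        ∫ u in Set.Ioi (0:ℝ), Real.exp (-s ^ 2 / (4 * u)) * u ^ (-(3:ℝ)/2) *
          (∫ z in Set.Ioi (0:ℝ), Real.exp (-u * z) * F z) := by
  have hfubini : ∫ u in Ioi 0, exp (-s ^ 2 / (4 * u)) * u ^ (-(3 : ℝ) / 2) *
        ∫ z in Ioi 0, exp (-u * z) * F z
      = ∫ z in Ioi 0, 2 * √π / s * exp (-s * √z) * F z := by
    simp_rw [← integral_const_mul]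
    rw [integral_integral_swap (integrable_levy_kernel_mul_exp_neg_mul_mul hF hFb hs)]
    refine setIntegral_congr_fun measurableSet_Ioi fun z (hz : 0 < z) => ?_
    simp_rw [← mul_assoc]
    rw [integral_mul_const, integral_levy_kernel_mul_exp_neg_mul_Ioi hs hz]
  rw [hfubini, ← integral_two_mul_smul_comp_sq_Ioi (fun z => 2 * √π / s * exp (-s * √z) * F z),
    ← integral_const_mul]
  refine setIntegral_congr_fun measurableSet_Ioi fun t (ht : 0 < t) => ?_
  rw [smul_eq_mul, sqrt_sq ht.le]
  field_simp
  ring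
end

section
/- For continuous F : ℝ → ℝ with compact support in [0,∞) (or suitable decay) and s > 1, ∫₀^∞ e^(−s t) · (∫₀^∞ (t^u · F(u)) / Γ(u+1) du) dt = f(ln s) / s, where f(w) = ∫₀^∞ e^(−w u) F(u) du. -/
open MeasureTheory Real

/-!
After Fubini, the inner integral in `t` is Euler's integral
`∫₀^∞ e^{-st} t^u dt = Γ(u+1) / s^{u+1}`, so the `Γ(u+1)` cancels and
`s^{-(u+1)} = e^{-u log s} / s` leaves the Laplace transform of `F` at `log s`, divided by `s`.
Fubini applies because the same computation with `|F|` in place of `F` gives the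
integrable function `u ↦ |F u| s^{-(u+1)}`.
-/

@[fun_prop]
lemma Real.measurable_Gamma : Measurable Real.Gamma := by
  have hΓ : Measurable Complex.Gamma := by
    simpa [Pi.inv_def] using Complex.differentiable_one_div_Gamma.continuous.measurable.inv
  exact Complex.measurable_re.comp (hΓ.comp Complex.measurable_ofReal)

lemma integral_exp_neg_mul_mul_rpow_mul_div_Gamma {s u : ℝ} (hs : 0 < s) (hu : -1 < u) (c : ℝ) :
    ∫ t in Set.Ioi (0:ℝ), exp (-s * t) * (t ^ u * c / Gamma (u + 1)) = c * (1 / s) ^ (u + 1) := by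
  have hΓ : Gamma (u + 1) ≠ 0 := (Gamma_pos_of_pos (by linarith)).ne'
  have h := integral_rpow_mul_exp_neg_mul_Ioi (a := u + 1) (by linarith) hs
  rw [add_sub_cancel_right] at h
  calc ∫ t in Set.Ioi (0:ℝ), exp (-s * t) * (t ^ u * c / Gamma (u + 1))
      = c / Gamma (u + 1) * ∫ t in Set.Ioi (0:ℝ), t ^ u * exp (-(s * t)) := by
        rw [← integral_const_mul]; congr 1; ext t; rw [neg_mul]; ring
    _ = c * (1 / s) ^ (u + 1) := by rw [h]; field_simp

lemma integrableOn_exp_neg_mul_mul_rpow {s u : ℝ} (hs : 0 < s) (hu : -1 < u) :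
    IntegrableOn (fun t => exp (-s * t) * t ^ u) (Set.Ioi 0) := by
  simpa [mul_comm] using integrableOn_rpow_mul_exp_neg_mul_rpow hu one_pos hs

lemma one_div_rpow_add_one_eq_exp_neg_log_mul_div {s : ℝ} (hs : 0 < s) (u : ℝ) :
    (1 / s) ^ (u + 1) = exp (-log s * u) / s := by
  rw [rpow_def_of_pos (by positivity), one_div, log_inv, neg_mul, ← neg_mul, mul_add, mul_one,
    exp_add, exp_neg (log s), exp_log hs]
  ring

lemma integrable_exp_neg_mul_mul_rpow_mul_div_Gamma {F : ℝ → ℝ} (hF : Continuous F)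
    (hsupp : HasCompactSupport F) {s : ℝ} (hs : 0 < s) :
    Integrable (fun p : ℝ × ℝ => exp (-s * p.1) * (p.1 ^ p.2 * F p.2 / Gamma (p.2 + 1)))
      ((volume.restrict (Set.Ioi 0)).prod (volume.restrict (Set.Ioi 0))) := by
  refine (integrable_prod_iff' (by fun_prop : Measurable _).aestronglyMeasurable).2 ⟨?_, ?_⟩
  · filter_upwards [ae_restrict_mem measurableSet_Ioi] with u hu
    refine IntegrableOn.congr_fun ((integrableOn_exp_neg_mul_mul_rpow (u := u) hs
      (by linarith [hu.out])).mul_const (F u / Gamma (u + 1))) (fun t _ => ?_) measurableSet_Ioi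
    ring
  · have hbound : Integrable (fun u => |F u| * (1 / s) ^ (u + 1)) (volume.restrict (Set.Ioi 0)) :=
      ((hF.abs.mul (by fun_prop (disch := positivity))).integrable_of_hasCompactSupport hsupp.abs.mul_right).restrict
    refine hbound.congr ?_
    filter_upwards [ae_restrict_mem measurableSet_Ioi] with u hu
    have hΓ : 0 < Gamma (u + 1) := Gamma_pos_of_pos (by linarith [hu.out])
    rw [← integral_exp_neg_mul_mul_rpow_mul_div_Gamma hs (by linarith [hu.out])]
    refine setIntegral_congr_fun measurableSet_Ioi (fun t ht => ?_)
    simp only [norm_mul, norm_div, norm_eq_abs, abs_exp, abs_of_pos hΓ,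
      abs_of_pos (rpow_pos_of_pos ht.out u)]

theorem stmt_3_general (F : ℝ → ℝ) (hF : Continuous F) (hsupp : HasCompactSupport F)
    (s : ℝ) (hs : 1 < s) :
    ∫ t in Set.Ioi (0:ℝ), Real.exp (-s * t) *
        (∫ u in Set.Ioi (0:ℝ), t ^ u * F u / Real.Gamma (u + 1))
      = (∫ u in Set.Ioi (0:ℝ), Real.exp (-(Real.log s) * u) * F u) / s := by
  have hs0 : 0 < s := by linarith
  calc ∫ t in Set.Ioi (0:ℝ), exp (-s * t) * ∫ u in Set.Ioi (0:ℝ), t ^ u * F u / Gamma (u + 1)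
      = ∫ t in Set.Ioi (0:ℝ), ∫ u in Set.Ioi (0:ℝ),
          exp (-s * t) * (t ^ u * F u / Gamma (u + 1)) := by simp_rw [integral_const_mul]
    _ = ∫ u in Set.Ioi (0:ℝ), ∫ t in Set.Ioi (0:ℝ),
          exp (-s * t) * (t ^ u * F u / Gamma (u + 1)) :=
        integral_integral_swap (integrable_exp_neg_mul_mul_rpow_mul_div_Gamma hF hsupp hs0)
    _ = ∫ u in Set.Ioi (0:ℝ), exp (-log s * u) * F u / s := by
        refine setIntegral_congr_fun measurableSet_Ioi (fun u hu => ?_)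
        rw [integral_exp_neg_mul_mul_rpow_mul_div_Gamma hs0 (by linarith [hu.out]),
          one_div_rpow_add_one_eq_exp_neg_log_mul_div hs0]
        ring
    _ = (∫ u in Set.Ioi (0:ℝ), exp (-log s * u) * F u) / s := integral_div _ _

theorem stmt_3 (F : ℝ → ℝ) (hF : Continuous F) (hsupp : HasCompactSupport F)
    (hpos : Function.support F ⊆ Set.Ici 0) (s : ℝ) (hs : 1 < s) :
    ∫ t in Set.Ioi (0:ℝ), Real.exp (-s * t) *
        (∫ u in Set.Ioi (0:ℝ), t ^ u * F u / Real.Gamma (u + 1))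
      = (∫ u in Set.Ioi (0:ℝ), Real.exp (-(Real.log s) * u) * F u) / s :=
  stmt_3_general F hF hsupp s hs
end

section
/- Generalized implicit log transform with power shift: for a > 0, b ≥ 0, s > 1, and continuous compactly supported F on [0,∞), ∫₀^∞ e^(−s t) · (∫₀^∞ t^(a u + b) F(u) / Γ(a u + b + 1) du) dt = f(a · ln s) / s^(b+1), where f(w) = ∫₀^∞ e^(−w u) F(u) du. -/
/-! The bound `t ^ p / Γ(p + 1) ≤ exp (t + 1)` (compare `Γ(p + 1)` with the Euler integral
over `(t, t + 1]`) dominates the kernel `exp (-s t) t ^ (a u + b) F u / Γ(a u + b + 1)` by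
`e · exp (-(s - 1) t) · |F u|`, which is integrable on `(0, ∞)²` because `s > 1`. By Fubini the
`t`-integral may be taken first; it is the Gamma integral
`∫ exp (-s t) t ^ p dt = Γ(p + 1) / s ^ (p + 1)`, and `s ^ (a u + b + 1) = exp (a log s · u) · s ^ (b + 1)`. -/

open MeasureTheory Real Set

lemma exp_neg_mul_rpow_le_Gamma_add_one {t p : ℝ} (ht : 0 ≤ t) (hp : 0 ≤ p) :
    exp (-(t + 1)) * t ^ p ≤ Gamma (p + 1) := by
  have hInt : IntegrableOn (fun x : ℝ => exp (-x) * x ^ (p + 1 - 1)) (Ioi 0) :=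
    GammaIntegral_convergent (by linarith)
  have hsub : Ioc t (t + 1) ⊆ Ioi 0 := fun x hx => lt_of_le_of_lt ht hx.1
  rw [Gamma_eq_integral (by linarith)]
  calc exp (-(t + 1)) * t ^ p = ∫ _ in Ioc t (t + 1), exp (-(t + 1)) * t ^ p := by
        simp
    _ ≤ ∫ x in Ioc t (t + 1), exp (-x) * x ^ (p + 1 - 1) := by
        refine setIntegral_mono_on (integrableOn_const (by simp [Real.volume_Ioc]))
          (hInt.mono_set hsub) measurableSet_Ioc fun x hx => ?_
        rw [add_sub_cancel_right]
        exact mul_le_mul (exp_le_exp.2 (by linarith [hx.2])) (rpow_le_rpow ht hx.1.le hp)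
          (rpow_nonneg ht p) (exp_pos _).le
    _ ≤ ∫ x in Ioi 0, exp (-x) * x ^ (p + 1 - 1) := by
        refine setIntegral_mono_set hInt ?_ (Filter.Eventually.of_forall hsub)
        filter_upwards [self_mem_ae_restrict measurableSet_Ioi] with x hx
        exact mul_nonneg (exp_pos _).le (rpow_nonneg (le_of_lt hx) _)

lemma rpow_div_Gamma_add_one_le_exp {t p : ℝ} (ht : 0 ≤ t) (hp : 0 ≤ p) :
    t ^ p / Gamma (p + 1) ≤ exp (t + 1) := by
  have h := mul_le_mul_of_nonneg_left (exp_neg_mul_rpow_le_Gamma_add_one ht hp)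
    (exp_pos (t + 1)).le
  rwa [← mul_assoc, ← exp_add, add_neg_cancel, exp_zero, one_mul,
    ← div_le_iff₀ (Gamma_pos_of_pos (by linarith))] at h

lemma integral_exp_neg_mul_rpow_mul_div_Gamma {p s : ℝ} (hp : -1 < p) (hs : 0 < s) (c : ℝ) :
    ∫ t in Ioi 0, exp (-s * t) * (t ^ p * c / Gamma (p + 1)) = c / s ^ (p + 1) := by
  have hp1 : 0 < p + 1 := by linarith
  have hGamma := integral_rpow_mul_exp_neg_mul_Ioi hp1 hs
  rw [add_sub_cancel_right] at hGamma
  calc ∫ t in Ioi 0, exp (-s * t) * (t ^ p * c / Gamma (p + 1))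
      = c / Gamma (p + 1) * ∫ t in Ioi 0, t ^ p * exp (-(s * t)) := by
        rw [← integral_const_mul]
        congr 1 with t
        rw [neg_mul]
        ring
    _ = c / s ^ (p + 1) := by
        rw [hGamma, one_div, inv_rpow hs.le]
        field_simp [(Gamma_pos_of_pos hp1).ne']

lemma continuousOn_rpow_div_Gamma {a b : ℝ} (ha : 0 ≤ a) (hb : 0 ≤ b) :
    ContinuousOn (fun z : ℝ × ℝ => z.1 ^ (a * z.2 + b) / Gamma (a * z.2 + b + 1))
      (Ioi 0 ×ˢ Ioi 0) := by
  have hpos : ∀ z ∈ Ioi (0 : ℝ) ×ˢ Ioi 0, 0 < a * z.2 + b + 1 := fun z hz => by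
    have : 0 ≤ a * z.2 := mul_nonneg ha (le_of_lt hz.2)
    linarith
  refine ContinuousOn.div ?_ ?_ fun z hz => (Gamma_pos_of_pos (hpos z hz)).ne'
  · exact continuousOn_fst.rpow (by fun_prop) fun z hz => Or.inl (ne_of_gt hz.1)
  · exact differentiableOn_Gamma_Ioi.continuousOn.comp (by fun_prop) hpos

lemma integrable_exp_neg_mul_rpow_mul_div_Gamma {F : ℝ → ℝ} (hF : IntegrableOn F (Ioi 0))
    {a b s : ℝ} (ha : 0 ≤ a) (hb : 0 ≤ b) (hs : 1 < s) :
    Integrable (fun z : ℝ × ℝ =>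
        exp (-s * z.1) * (z.1 ^ (a * z.2 + b) * F z.2 / Gamma (a * z.2 + b + 1)))
      ((volume.restrict (Ioi 0)).prod (volume.restrict (Ioi 0))) := by
  have hmeas : AEStronglyMeasurable (fun z : ℝ × ℝ =>
      exp (-s * z.1) * (z.1 ^ (a * z.2 + b) / Gamma (a * z.2 + b + 1)) * F z.2)
      ((volume.restrict (Ioi 0)).prod (volume.restrict (Ioi 0))) := by
    refine AEStronglyMeasurable.mul ?_ hF.aestronglyMeasurable.comp_snd
    rw [Measure.prod_restrict]
    exact ((continuous_exp.comp (by fun_prop)).continuousOn.mul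
      (continuousOn_rpow_div_Gamma ha hb)).aestronglyMeasurable
      (measurableSet_Ioi.prod measurableSet_Ioi)
  have hdom : Integrable (fun z : ℝ × ℝ => exp 1 * exp (-(s - 1) * z.1) * |F z.2|)
      ((volume.restrict (Ioi 0)).prod (volume.restrict (Ioi 0))) :=
    ((exp_neg_integrableOn_Ioi 0 (by linarith)).const_mul _).mul_prod hF.abs
  refine hdom.mono (hmeas.congr (ae_of_all _ fun z => by ring)) ?_
  rw [Measure.prod_restrict]
  filter_upwards [self_mem_ae_restrict (measurableSet_Ioi.prod measurableSet_Ioi)]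
    with z ⟨ht, hu⟩
  have hp : 0 ≤ a * z.2 + b := add_nonneg (mul_nonneg ha (le_of_lt hu)) hb
  have hGamma : 0 < Gamma (a * z.2 + b + 1) := Gamma_pos_of_pos (by linarith)
  calc ‖exp (-s * z.1) * (z.1 ^ (a * z.2 + b) * F z.2 / Gamma (a * z.2 + b + 1))‖
      = exp (-s * z.1) * (z.1 ^ (a * z.2 + b) / Gamma (a * z.2 + b + 1)) * |F z.2| := by
        rw [Real.norm_eq_abs, abs_mul, abs_div, abs_mul, abs_of_pos (exp_pos _),
          abs_of_pos hGamma, abs_of_nonneg (rpow_nonneg (le_of_lt ht) _)]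
        ring
    _ ≤ exp (-s * z.1) * exp (z.1 + 1) * |F z.2| := by
        gcongr
        exact rpow_div_Gamma_add_one_le_exp (le_of_lt ht) hp
    _ = exp 1 * exp (-(s - 1) * z.1) * |F z.2| := by
        rw [← exp_add, ← exp_add]
        ring_nf
    _ ≤ ‖exp 1 * exp (-(s - 1) * z.1) * |F z.2|‖ := le_abs_self _

theorem integral_exp_neg_mul_integral_rpow_mul_div_Gamma {F : ℝ → ℝ}
    (hF : IntegrableOn F (Ioi 0)) {a b s : ℝ} (ha : 0 ≤ a) (hb : 0 ≤ b) (hs : 1 < s) :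
    ∫ t in Ioi 0, exp (-s * t) * ∫ u in Ioi 0, t ^ (a * u + b) * F u / Gamma (a * u + b + 1)
      = (∫ u in Ioi 0, exp (-(a * log s) * u) * F u) / s ^ (b + 1) := by
  have hs0 : 0 < s := by linarith
  calc ∫ t in Ioi 0, exp (-s * t) * ∫ u in Ioi 0, t ^ (a * u + b) * F u / Gamma (a * u + b + 1)
      = ∫ t in Ioi 0, ∫ u in Ioi 0,
          exp (-s * t) * (t ^ (a * u + b) * F u / Gamma (a * u + b + 1)) := by
        simp only [integral_const_mul]
    _ = ∫ u in Ioi 0, ∫ t in Ioi 0,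
          exp (-s * t) * (t ^ (a * u + b) * F u / Gamma (a * u + b + 1)) :=
        integral_integral_swap (integrable_exp_neg_mul_rpow_mul_div_Gamma hF ha hb hs)
    _ = ∫ u in Ioi 0, exp (-(a * log s) * u) * F u / s ^ (b + 1) := by
        refine setIntegral_congr_fun measurableSet_Ioi fun u (hu : 0 < u) => ?_
        have hp : -1 < a * u + b := by nlinarith
        rw [integral_exp_neg_mul_rpow_mul_div_Gamma hp hs0, add_assoc, rpow_add hs0,
          rpow_def_of_pos hs0 (a * u), show log s * (a * u) = a * log s * u by ring, neg_mul,
          exp_neg]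
        ring
    _ = (∫ u in Ioi 0, exp (-(a * log s) * u) * F u) / s ^ (b + 1) := integral_div _ _

theorem stmt_7_general (F : ℝ → ℝ) (hF : Continuous F) (hsupp : HasCompactSupport F)
    (a b s : ℝ) (ha : 0 < a) (hb : 0 ≤ b)
    (hs : 1 < s) :
    ∫ t in Set.Ioi (0:ℝ), Real.exp (-s * t) *
        (∫ u in Set.Ioi (0:ℝ), t ^ (a * u + b) * F u / Real.Gamma (a * u + b + 1))
      = (∫ u in Set.Ioi (0:ℝ), Real.exp (-(a * Real.log s) * u) * F u) / s ^ (b + 1) :=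
  integral_exp_neg_mul_integral_rpow_mul_div_Gamma
    (hF.integrable_of_hasCompactSupport hsupp).integrableOn ha.le hb hs

theorem stmt_7 (F : ℝ → ℝ) (hF : Continuous F) (hsupp : HasCompactSupport F)
    (hpos : Function.support F ⊆ Set.Ici 0) (a b s : ℝ) (ha : 0 < a) (hb : 0 ≤ b)
    (hs : 1 < s) :
    ∫ t in Set.Ioi (0:ℝ), Real.exp (-s * t) *
        (∫ u in Set.Ioi (0:ℝ), t ^ (a * u + b) * F u / Real.Gamma (a * u + b + 1))
      = (∫ u in Set.Ioi (0:ℝ), Real.exp (-(a * Real.log s) * u) * F u) / s ^ (b + 1) :=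
  stmt_7_general F hF hsupp a b s ha hb hs
end

section
/- Translated implicit log transform: for a > 0, b ≥ 0, real α, s > α + 1, and continuous compactly supported F on [0,∞), ∫₀^∞ e^(−s t) · e^(α t) · (∫₀^∞ t^(a u + b) F(u) / Γ(a u + b + 1) du) dt = f(a · ln(s − α)) / (s − α)^(b+1), where f(w) = ∫₀^∞ e^(−w u) F(u) du. -/
open MeasureTheory Real Set

/-!
With `σ = s - α` and `p = a u + b`, swap the two integrals: the bound `t ^ p ≤ Γ(p + 1) e^t`
dominates the integrand by `e^{-(σ - 1) t} |F u|`, integrable since `σ > 1`. The inner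
`t`-integral is then the Laplace transform
`∫₀^∞ e^{-σ t} t ^ p / Γ(p + 1) dt = σ ^ (-(p + 1)) = e^{-(a log σ) u} / σ ^ (b + 1)`.
-/

theorem rpow_le_Gamma_add_one_mul_exp {p t : ℝ} (hp : 0 ≤ p) (ht : 0 < t) :
    t ^ p ≤ Gamma (p + 1) * exp t := by
  have hconv : IntegrableOn (fun x : ℝ => exp (-x) * x ^ p) (Ioi 0) := by
    simpa using GammaIntegral_convergent (s := p + 1) (by linarith)
  have htail : t ^ p * exp (-t) ≤ Gamma (p + 1) :=
    calc t ^ p * exp (-t) = ∫ x in Ioi t, exp (-x) * t ^ p := by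
          rw [integral_mul_const, integral_exp_neg_Ioi, mul_comm]
      _ ≤ ∫ x in Ioi t, exp (-x) * x ^ p := by
          refine setIntegral_mono_on ?_ (hconv.mono_set (Ioi_subset_Ioi ht.le))
            measurableSet_Ioi fun x hx => ?_
          · simpa [IntegrableOn] using (exp_neg_integrableOn_Ioi t one_pos).mul_const (t ^ p)
          · gcongr; exact hx.le
      _ ≤ ∫ x in Ioi 0, exp (-x) * x ^ p := by
          refine setIntegral_mono_set hconv ?_ (Ioi_subset_Ioi ht.le).eventuallyLE
          filter_upwards [ae_restrict_mem measurableSet_Ioi] with x hx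
          exact mul_nonneg (exp_pos _).le (rpow_nonneg (le_of_lt hx) p)
      _ = Gamma (p + 1) := by simp [Gamma_eq_integral (by linarith : 0 < p + 1)]
  calc t ^ p = t ^ p * exp (-t) * exp t := by
        rw [mul_assoc, ← exp_add, neg_add_cancel, exp_zero, mul_one]
    _ ≤ Gamma (p + 1) * exp t := by gcongr

theorem integral_exp_neg_mul_mul_rpow_div_Gamma {p σ : ℝ} (hp : -1 < p) (hσ : 0 < σ) :
    ∫ t in Ioi 0, exp (-(σ * t)) * (t ^ p / Gamma (p + 1)) = σ ^ (-(p + 1)) := by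
  have hp1 : 0 < p + 1 := by linarith
  have h := integral_rpow_mul_exp_neg_mul_Ioi hp1 hσ
  rw [add_sub_cancel_right] at h
  simp_rw [mul_div_assoc', mul_comm (exp _), integral_div, h, one_div, inv_rpow hσ.le,
    rpow_neg hσ.le, mul_div_cancel_right₀ _ (Gamma_pos_of_pos hp1).ne']

theorem rpow_neg_mul_add_add_one {σ : ℝ} (hσ : 0 < σ) (a b u : ℝ) :
    σ ^ (-(a * u + b + 1)) = exp (-(a * log σ) * u) / σ ^ (b + 1) := by
  rw [show -(a * u + b + 1) = -(a * u) - (b + 1) by ring, rpow_sub hσ, rpow_def_of_pos hσ]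
  ring_nf

theorem integrable_exp_neg_mul_mul_rpow_div_Gamma {F : ℝ → ℝ} (hF : IntegrableOn F (Ioi 0))
    {a b σ : ℝ} (ha : 0 ≤ a) (hb : 0 ≤ b) (hσ : 1 < σ) :
    Integrable (Function.uncurry fun t u =>
        exp (-(σ * t)) * (t ^ (a * u + b) * F u / Gamma (a * u + b + 1)))
      ((volume.restrict (Ioi 0)).prod (volume.restrict (Ioi 0))) := by
  set μ := volume.restrict (Ioi (0 : ℝ))
  have hquadrant : ∀ᵐ q ∂μ.prod μ, q ∈ Ioi (0 : ℝ) ×ˢ Ioi (0 : ℝ) := by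
    rw [Measure.prod_restrict]
    exact ae_restrict_mem (measurableSet_Ioi.prod measurableSet_Ioi)
  have hΓ : ContinuousOn (fun q : ℝ × ℝ => Gamma (a * q.2 + b + 1)) (Ioi 0 ×ˢ Ioi 0) :=
    differentiableOn_Gamma_Ioi.continuousOn.comp (by fun_prop)
      fun q hq => by have : 0 < q.2 := hq.2; simp only [mem_Ioi]; positivity
  have hkernel : AEStronglyMeasurable
      (fun q : ℝ × ℝ => exp (-(σ * q.1)) * q.1 ^ (a * q.2 + b) / Gamma (a * q.2 + b + 1))
      (μ.prod μ) := by
    rw [Measure.prod_restrict]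
    refine ContinuousOn.aestronglyMeasurable ?_ (measurableSet_Ioi.prod measurableSet_Ioi)
    refine ((continuous_exp.comp (by fun_prop)).continuousOn.mul
      (continuousOn_fst.rpow (by fun_prop) fun q hq => Or.inl hq.1.ne')).div hΓ fun q hq => ?_
    have : 0 < q.2 := hq.2
    positivity
  have hdom : Integrable (fun q : ℝ × ℝ => exp (-(σ - 1) * q.1) * |F q.2|) (μ.prod μ) :=
    (exp_neg_integrableOn_Ioi 0 (by linarith)).mul_prod hF.abs
  refine hdom.mono' ((hkernel.mul hF.aestronglyMeasurable.comp_snd).congr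
    (.of_forall fun q => by simp only [Function.uncurry, Pi.mul_apply]; ring)) ?_
  filter_upwards [hquadrant] with ⟨t, u⟩ ⟨ht, hu⟩
  simp only [mem_Ioi] at ht hu
  have hp : 0 ≤ a * u + b := by positivity
  have hker :
      exp (-(σ * t)) * t ^ (a * u + b) / Gamma (a * u + b + 1) ≤ exp (-(σ - 1) * t) := by
    rw [div_le_iff₀ (by positivity)]
    calc exp (-(σ * t)) * t ^ (a * u + b)
        ≤ exp (-(σ * t)) * (Gamma (a * u + b + 1) * exp t) := by
          gcongr; exact rpow_le_Gamma_add_one_mul_exp hp ht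
      _ = exp (-(σ - 1) * t) * Gamma (a * u + b + 1) := by
          rw [mul_left_comm, ← exp_add]; ring_nf
  calc ‖Function.uncurry (fun t u =>
        exp (-(σ * t)) * (t ^ (a * u + b) * F u / Gamma (a * u + b + 1))) (t, u)‖
      = |exp (-(σ * t)) * t ^ (a * u + b) / Gamma (a * u + b + 1) * F u| := by
        rw [Function.uncurry_apply_pair, norm_eq_abs]; ring_nf
    _ = exp (-(σ * t)) * t ^ (a * u + b) / Gamma (a * u + b + 1) * |F u| := by
        rw [abs_mul, abs_of_nonneg (by positivity)]
    _ ≤ exp (-(σ - 1) * t) * |F u| := by gcongr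

theorem stmt_8_general (F : ℝ → ℝ) (hF : Continuous F) (hsupp : HasCompactSupport F)
    (a b α s : ℝ) (ha : 0 < a) (hb : 0 ≤ b)
    (hs : α + 1 < s) :
    ∫ t in Set.Ioi (0:ℝ), Real.exp (-s * t) * Real.exp (α * t) *
        (∫ u in Set.Ioi (0:ℝ), t ^ (a * u + b) * F u / Real.Gamma (a * u + b + 1))
      = (∫ u in Set.Ioi (0:ℝ), Real.exp (-(a * Real.log (s - α)) * u) * F u)
          / (s - α) ^ (b + 1) := by
  have hσ : 1 < s - α := by linarith
  have hFi : IntegrableOn F (Ioi 0) := (hF.integrable_of_hasCompactSupport hsupp).integrableOn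
  calc _ = ∫ t in Ioi 0, ∫ u in Ioi 0,
          exp (-((s - α) * t)) * (t ^ (a * u + b) * F u / Gamma (a * u + b + 1)) := by
        refine setIntegral_congr_fun measurableSet_Ioi fun t _ => ?_
        rw [← exp_add, integral_const_mul]
        ring_nf
    _ = ∫ u in Ioi 0, ∫ t in Ioi 0,
          exp (-((s - α) * t)) * (t ^ (a * u + b) * F u / Gamma (a * u + b + 1)) :=
        integral_integral_swap (integrable_exp_neg_mul_mul_rpow_div_Gamma hFi ha.le hb hσ)
    _ = ∫ u in Ioi 0, exp (-(a * log (s - α)) * u) * F u / (s - α) ^ (b + 1) := by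
        refine setIntegral_congr_fun measurableSet_Ioi fun u (hu : 0 < u) => ?_
        have hp : -1 < a * u + b := neg_one_lt_zero.trans_le (by positivity)
        simp_rw [mul_div_right_comm _ (F u), ← mul_assoc, integral_mul_const]
        rw [integral_exp_neg_mul_mul_rpow_div_Gamma hp (by linarith),
          rpow_neg_mul_add_add_one (by linarith), div_mul_eq_mul_div]
    _ = _ := integral_div _ _

theorem stmt_8 (F : ℝ → ℝ) (hF : Continuous F) (hsupp : HasCompactSupport F)
    (hpos : Function.support F ⊆ Set.Ici 0) (a b α s : ℝ) (ha : 0 < a) (hb : 0 ≤ b)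
    (hs : α + 1 < s) :
    ∫ t in Set.Ioi (0:ℝ), Real.exp (-s * t) * Real.exp (α * t) *
        (∫ u in Set.Ioi (0:ℝ), t ^ (a * u + b) * F u / Real.Gamma (a * u + b + 1))
      = (∫ u in Set.Ioi (0:ℝ), Real.exp (-(a * Real.log (s - α)) * u) * F u)
          / (s - α) ^ (b + 1) :=
  stmt_8_general F hF hsupp a b α s ha hb hs
end

section
/- Finite sum version: for a > 0, b ≥ 0, real α, s > α + 1, coefficients c₀,…,c_N ∈ ℝ, and continuous compactly supported F on [0,∞), ∫₀^∞ e^(−s t) · e^(α t) · (Σ_{n=0}^{N} c_n · t^n · ∫₀^∞ t^(a u + b) F(u) / Γ(a u + b + n + 1) du) dt = f(a·ln(s−α)) · Σ_{n=0}^{N} c_n / (s−α)^(n+b+1), where f(w) = ∫₀^∞ e^(−w u) F(u) du. -/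
/-!
With σ = s − α, the n-th summand is the double integral over (0,∞)² of the kernel
t^(p u − 1) e^(−σ t) F u / Γ(p u), where p u = a u + b + n + 1. Euler's integral
∫₀^∞ t^(p − 1) e^(−σ t) dt = Γ(p) σ^(−p) cancels the Gamma factor, so integrating in t first
leaves ∫₀^∞ F u σ^(−(a u + b + n + 1)) du = f(a ln σ) / σ^(n + b + 1). The same computation for
|F| gives a continuous compactly supported function of u, so the kernel is absolutely integrable
and Fubini applies.
-/

open MeasureTheory Real Set

noncomputable def gammaKernel (σ : ℝ) (p G : ℝ → ℝ) (x : ℝ × ℝ) : ℝ :=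
  x.1 ^ (p x.2 - 1) * exp (-(σ * x.1)) * (G x.2 / Gamma (p x.2))

section GammaKernel

variable {σ : ℝ} {p G : ℝ → ℝ}

lemma integrableOn_rpow_sub_one_mul_exp_neg_mul {q : ℝ} (hq : 0 < q) (hσ : 0 < σ) :
    IntegrableOn (fun t : ℝ => t ^ (q - 1) * exp (-(σ * t))) (Ioi 0) := by
  simpa [rpow_one, neg_mul] using
    integrableOn_rpow_mul_exp_neg_mul_rpow (by linarith : -1 < q - 1) zero_lt_one hσ

lemma setIntegral_gammaKernel_fst (hσ : 0 < σ) {u : ℝ} (hu : 0 < p u) :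
    ∫ t in Ioi 0, gammaKernel σ p G (t, u) = G u * (1 / σ) ^ p u := by
  simp only [gammaKernel]
  rw [integral_mul_const, integral_rpow_mul_exp_neg_mul_Ioi hu hσ]
  field_simp [(Gamma_pos_of_pos hu).ne']

lemma norm_gammaKernel {t u : ℝ} (ht : 0 ≤ t) (hu : 0 < p u) :
    ‖gammaKernel σ p G (t, u)‖ = gammaKernel σ p (fun u => |G u|) (t, u) := by
  simp only [gammaKernel, norm_mul, norm_div, norm_eq_abs, abs_of_nonneg (rpow_nonneg ht _),
    abs_of_pos (exp_pos _), abs_of_pos (Gamma_pos_of_pos hu)]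

lemma Continuous.integrable_mul_rpow_of_hasCompactSupport (hG : Continuous G)
    (hGc : HasCompactSupport G) (hp : Continuous p) {r : ℝ} (hr : 0 < r) :
    Integrable (fun u => G u * r ^ p u) :=
  (hG.mul (continuous_const.rpow hp fun _ => Or.inl hr.ne')).integrable_of_hasCompactSupport
    hGc.mul_right

variable (hp : Continuous p) (hp0 : ∀ u, 0 < u → 0 < p u) (hG : Continuous G)
include hp hp0 hG

lemma continuousOn_gammaKernel : ContinuousOn (gammaKernel σ p G) (Ioi 0 ×ˢ Ioi 0) := by
  rintro x ⟨ht, hu⟩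
  have hΓ : ContinuousAt (fun x : ℝ × ℝ => Gamma (p x.2)) x :=
    ContinuousAt.comp (f := fun x : ℝ × ℝ => p x.2)
      (differentiableOn_Gamma_Ioi.continuousOn.continuousAt (Ioi_mem_nhds (hp0 _ hu)))
      (hp.comp continuous_snd).continuousAt
  refine ContinuousAt.continuousWithinAt ?_
  exact ((continuousAt_fst.rpow ((hp.comp continuous_snd).sub continuous_const).continuousAt
    (Or.inl (ne_of_gt ht))).mul (by fun_prop)).mul
    ((hG.comp continuous_snd).continuousAt.div hΓ (Gamma_pos_of_pos (hp0 _ hu)).ne')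

variable (hσ : 0 < σ) (hGc : HasCompactSupport G)
include hσ hGc

lemma integrable_gammaKernel :
    Integrable (gammaKernel σ p G) ((volume.restrict (Ioi 0)).prod (volume.restrict (Ioi 0))) := by
  have hmeas : AEStronglyMeasurable (gammaKernel σ p G)
      ((volume.restrict (Ioi 0)).prod (volume.restrict (Ioi 0))) := by
    rw [Measure.prod_restrict]
    exact (continuousOn_gammaKernel hp hp0 hG).aestronglyMeasurable
      (measurableSet_Ioi.prod measurableSet_Ioi)
  refine (integrable_prod_iff' hmeas).2 ⟨?_, ?_⟩
  · filter_upwards [ae_restrict_mem measurableSet_Ioi] with u hu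
    exact (integrableOn_rpow_sub_one_mul_exp_neg_mul (hp0 u hu) hσ).mul_const
      (G u / Gamma (p u))
  · refine ((hG.abs.integrable_mul_rpow_of_hasCompactSupport hGc.abs hp
      (one_div_pos.2 hσ)).restrict).congr ?_
    filter_upwards [ae_restrict_mem measurableSet_Ioi] with u hu
    rw [← setIntegral_gammaKernel_fst (G := fun u => |G u|) hσ (hp0 u hu)]
    refine setIntegral_congr_fun measurableSet_Ioi fun t ht => ?_
    exact (norm_gammaKernel (le_of_lt ht) (hp0 u hu)).symm

lemma integral_integral_gammaKernel :
    ∫ t in Ioi 0, ∫ u in Ioi 0, gammaKernel σ p G (t, u) = ∫ u in Ioi 0, G u * (1 / σ) ^ p u := by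
  rw [integral_integral_swap (f := fun t u => gammaKernel σ p G (t, u))
    (integrable_gammaKernel hp hp0 hG hσ hGc)]
  refine setIntegral_congr_fun measurableSet_Ioi fun u hu => ?_
  exact setIntegral_gammaKernel_fst hσ (hp0 u hu)

end GammaKernel

lemma gammaKernel_affine_apply (σ a b : ℝ) (n : ℕ) (G : ℝ → ℝ) {t : ℝ} (ht : 0 < t) (u : ℝ) :
    gammaKernel σ (fun u => a * u + (n + b + 1)) G (t, u)
      = exp (-(σ * t)) * t ^ n * (t ^ (a * u + b) * G u / Gamma (a * u + b + n + 1)) := by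
  simp only [gammaKernel]
  rw [show a * u + (n + b + 1) - 1 = a * u + b + n by ring, rpow_add ht, rpow_natCast,
    show a * u + (n + b + 1) = a * u + b + n + 1 by ring]
  ring

lemma integral_integral_gammaKernel_affine {σ a q : ℝ} {G : ℝ → ℝ} (hσ : 0 < σ)
    (hG : Continuous G) (hGc : HasCompactSupport G) (ha : 0 ≤ a) (hq : 0 < q) :
    ∫ t in Ioi 0, ∫ u in Ioi 0, gammaKernel σ (fun u => a * u + q) G (t, u)
      = (∫ u in Ioi 0, exp (-(a * log σ) * u) * G u) / σ ^ q := by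
  rw [integral_integral_gammaKernel (by fun_prop) (fun u hu => by positivity) hG hσ hGc,
    ← integral_div]
  refine setIntegral_congr_fun measurableSet_Ioi fun u _ => ?_
  rw [rpow_add (by positivity), rpow_def_of_pos (by positivity) (a * u), one_div, log_inv,
    inv_rpow hσ.le]
  ring_nf

theorem stmt_9_general (F : ℝ → ℝ) (hF : Continuous F) (hsupp : HasCompactSupport F)
    (a b α s : ℝ) (ha : 0 < a) (hb : 0 ≤ b)
    (hs : α + 1 < s) (N : ℕ) (c : ℕ → ℝ) :
    ∫ t in Set.Ioi (0:ℝ), Real.exp (-s * t) * Real.exp (α * t) *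
        (∑ n ∈ Finset.range (N + 1), c n * t ^ n *
          ∫ u in Set.Ioi (0:ℝ), t ^ (a * u + b) * F u / Real.Gamma (a * u + b + n + 1))
      = (∫ u in Set.Ioi (0:ℝ), Real.exp (-(a * Real.log (s - α)) * u) * F u) *
          ∑ n ∈ Finset.range (N + 1), c n / (s - α) ^ ((n : ℝ) + b + 1) := by
  set σ := s - α
  have hσ : 0 < σ := by linarith
  set K : ℕ → ℝ × ℝ → ℝ := fun n => gammaKernel σ (fun u => a * u + (n + b + 1)) F
  have hK : ∀ n, Integrable (K n) ((volume.restrict (Ioi 0)).prod (volume.restrict (Ioi 0))) :=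
    fun n => integrable_gammaKernel (by fun_prop) (fun u hu => by positivity) hF hσ hsupp
  calc _ = ∫ t in Ioi 0, ∑ n ∈ Finset.range (N + 1), c n * ∫ u in Ioi 0, K n (t, u) := by
        refine setIntegral_congr_fun measurableSet_Ioi fun t (ht : 0 < t) => ?_
        simp only [K, gammaKernel_affine_apply _ _ _ _ _ ht, integral_const_mul, Finset.mul_sum]
        refine Finset.sum_congr rfl fun n _ => ?_
        rw [← exp_add, show -s * t + α * t = -(σ * t) by ring]
        ring
    _ = ∑ n ∈ Finset.range (N + 1), c n * ∫ t in Ioi 0, ∫ u in Ioi 0, K n (t, u) := by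
        rw [integral_finsetSum _ fun n _ => (hK n).integral_prod_left.const_mul (c n)]
        simp only [integral_const_mul]
    _ = _ := by
        rw [Finset.mul_sum]
        refine Finset.sum_congr rfl fun n _ => ?_
        rw [integral_integral_gammaKernel_affine hσ hF hsupp ha.le (by positivity)]
        ring

theorem stmt_9 (F : ℝ → ℝ) (hF : Continuous F) (hsupp : HasCompactSupport F)
    (hpos : Function.support F ⊆ Set.Ici 0) (a b α s : ℝ) (ha : 0 < a) (hb : 0 ≤ b)
    (hs : α + 1 < s) (N : ℕ) (c : ℕ → ℝ) :
    ∫ t in Set.Ioi (0:ℝ), Real.exp (-s * t) * Real.exp (α * t) *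
        (∑ n ∈ Finset.range (N + 1), c n * t ^ n *
          ∫ u in Set.Ioi (0:ℝ), t ^ (a * u + b) * F u / Real.Gamma (a * u + b + n + 1))
      = (∫ u in Set.Ioi (0:ℝ), Real.exp (-(a * Real.log (s - α)) * u) * F u) *
          ∑ n ∈ Finset.range (N + 1), c n / (s - α) ^ ((n : ℝ) + b + 1) :=
  stmt_9_general F hF hsupp a b α s ha hb hs N c
end

section
/- For b > −1 and s > 0, ∫₀^∞ e^(−s t) · ( − t^b / Γ(b+1) · ( ln t − Γ'(b+1)/Γ(b+1) ) ) dt = ln(s) / s^(b+1). -/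
/-!
Differentiating the Mellin transform `Γ(a) = ∫₀^∞ t^(a-1) e^(-t) dt` under the integral sign gives
`Γ'(a) = ∫₀^∞ t^(a-1) log t e^(-t) dt`. The substitution `t ↦ r t` then yields the Laplace
transforms `∫₀^∞ t^(a-1) e^(-r t) dt = Γ(a) / r^a` and
`∫₀^∞ t^(a-1) log t e^(-r t) dt = (Γ'(a) - log r Γ(a)) / r^a`,
and subtracting `Γ'(a)/Γ(a)` times the first from the second cancels the `Γ'` terms.
-/

open MeasureTheory Real Set Filter Asymptotics
open scoped Topology

namespace Real

variable {a r : ℝ}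

lemma isBigO_exp_neg_mul_rpow_atTop (hr : 0 < r) (a : ℝ) :
    (fun t => exp (-(r * t))) =O[atTop] (· ^ (-a)) := by
  simpa only [neg_mul] using (isLittleO_exp_neg_mul_rpow_atTop hr (-a)).isBigO

lemma isBigO_exp_neg_mul_nhdsGT_zero (r : ℝ) :
    (fun t => exp (-(r * t))) =O[𝓝[>] 0] (· ^ (-(0 : ℝ))) := by
  simp_rw [neg_zero, rpow_zero]
  refine isBigO_const_of_tendsto (y := 1) ?_ one_ne_zero
  exact tendsto_nhdsWithin_of_tendsto_nhds
    ((by fun_prop : Continuous fun t => exp (-(r * t))).tendsto' 0 1 (by simp))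

lemma continuousOn_log_mul_exp_neg_mul (r : ℝ) :
    ContinuousOn (fun t => log t * exp (-(r * t))) (Ioi 0) :=
  (continuousOn_log.mono fun _ ht => (ne_of_gt ht)).mul (by fun_prop)

lemma integrableOn_rpow_mul_exp_neg_mul (ha : 0 < a) (hr : 0 < r) :
    IntegrableOn (fun t => t ^ (a - 1) * exp (-(r * t))) (Ioi 0) :=
  mellin_convergent_of_isBigO_scalar
    ((by fun_prop : Continuous fun t => exp (-(r * t))).continuousOn.locallyIntegrableOn
      measurableSet_Ioi)
    (isBigO_exp_neg_mul_rpow_atTop hr (a + 1)) (lt_add_one a)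
    (isBigO_exp_neg_mul_nhdsGT_zero r) ha

lemma integrableOn_rpow_mul_log_mul_exp_neg_mul (ha : 0 < a) (hr : 0 < r) :
    IntegrableOn (fun t => t ^ (a - 1) * (log t * exp (-(r * t)))) (Ioi 0) :=
  mellin_convergent_of_isBigO_scalar
    ((continuousOn_log_mul_exp_neg_mul r).locallyIntegrableOn measurableSet_Ioi)
    (isBigO_rpow_top_log_smul (lt_add_one (a + 1)) (isBigO_exp_neg_mul_rpow_atTop hr _))
    (lt_add_one a)
    (isBigO_rpow_zero_log_smul (half_pos ha) (isBigO_exp_neg_mul_nhdsGT_zero r)) (half_lt_self ha)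

lemma hasDerivAt_Gamma_integral (ha : 0 < a) :
    HasDerivAt Gamma (∫ t in Ioi 0, t ^ (a - 1) * (log t * exp (-t))) a := by
  have hre : 0 < (a : ℂ).re := by rwa [Complex.ofReal_re]
  have hC : HasDerivAt Complex.Gamma _ (a : ℂ) :=
    (Complex.hasDerivAt_GammaIntegral hre).congr_of_eventuallyEq <|
      ((Complex.continuous_re.tendsto _).eventually (lt_mem_nhds hre)).mono
        fun z hz => Complex.Gamma_eq_integral hz
  have hR := hC.real_of_complex
  simp_rw [Complex.Gamma_ofReal, Complex.ofReal_re] at hR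
  convert hR using 1
  rw [← Complex.ofReal_re (∫ t in Ioi 0, _), ← integral_complex_ofReal]
  congr 1
  refine setIntegral_congr_fun measurableSet_Ioi fun t ht => ?_
  rw [Complex.ofReal_mul, Complex.ofReal_mul, Complex.ofReal_cpow (le_of_lt ht),
    Complex.ofReal_sub, Complex.ofReal_one]

lemma integral_rpow_mul_exp_neg_mul_Ioi_eq_div (ha : 0 < a) (hr : 0 < r) :
    ∫ t in Ioi 0, t ^ (a - 1) * exp (-(r * t)) = Gamma a / r ^ a := by
  rw [integral_rpow_mul_exp_neg_mul_Ioi ha hr, one_div, inv_rpow hr.le, inv_mul_eq_div]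

lemma integral_rpow_mul_log_mul_exp_neg_mul_Ioi (ha : 0 < a) (hr : 0 < r) :
    ∫ t in Ioi 0, t ^ (a - 1) * (log t * exp (-(r * t)))
      = (deriv Gamma a - log r * Gamma a) / r ^ a := by
  have hscale : ∫ t in Ioi 0, (r * t) ^ (a - 1) * (log (r * t) * exp (-(r * t)))
      = r⁻¹ * deriv Gamma a := by
    rw [integral_comp_mul_left_Ioi (fun u => u ^ (a - 1) * (log u * exp (-u))) 0 hr, mul_zero,
      smul_eq_mul, (hasDerivAt_Gamma_integral ha).deriv]
  have hsplit : ∫ t in Ioi 0, (r * t) ^ (a - 1) * (log (r * t) * exp (-(r * t)))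
      = r ^ (a - 1) * (log r * (Gamma a / r ^ a) +
          ∫ t in Ioi 0, t ^ (a - 1) * (log t * exp (-(r * t)))) := by
    rw [← integral_rpow_mul_exp_neg_mul_Ioi_eq_div ha hr, ← integral_const_mul, ← integral_add
        ((integrableOn_rpow_mul_exp_neg_mul ha hr).const_mul _)
        (integrableOn_rpow_mul_log_mul_exp_neg_mul ha hr), ← integral_const_mul]
    refine setIntegral_congr_fun measurableSet_Ioi fun t (ht : 0 < t) => ?_
    rw [mul_rpow hr.le ht.le, log_mul hr.ne' ht.ne']
    ring
  rw [hsplit] at hscale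
  have hpow : r ^ a = r ^ (a - 1) * r := by rw [← rpow_add_one hr.ne', sub_add_cancel]
  have hpos : 0 < r ^ (a - 1) := rpow_pos_of_pos hr _
  rw [hpow] at hscale ⊢
  field_simp at hscale ⊢
  linear_combination hscale

lemma integral_rpow_mul_log_sub_mul_exp_neg_mul_Ioi (ha : 0 < a) (hr : 0 < r) (c : ℝ) :
    ∫ t in Ioi 0, t ^ (a - 1) * ((log t - c) * exp (-(r * t)))
      = (deriv Gamma a - (log r + c) * Gamma a) / r ^ a := by
  simp_rw [sub_mul, mul_sub, mul_left_comm _ c]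
  rw [integral_sub (integrableOn_rpow_mul_log_mul_exp_neg_mul ha hr)
    ((integrableOn_rpow_mul_exp_neg_mul ha hr).const_mul c), integral_const_mul,
    integral_rpow_mul_log_mul_exp_neg_mul_Ioi ha hr, integral_rpow_mul_exp_neg_mul_Ioi_eq_div ha hr]
  ring

end Real

theorem stmt_12 (b s : ℝ) (hb : -1 < b) (hs : 0 < s) :
    ∫ t in Set.Ioi (0:ℝ), Real.exp (-s * t) *
        (-(t ^ b / Real.Gamma (b + 1)) *
          (Real.log t - deriv Real.Gamma (b + 1) / Real.Gamma (b + 1)))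
      = Real.log s / s ^ (b + 1) := by
  have ha : 0 < b + 1 := by linarith
  have hΓ : Gamma (b + 1) ≠ 0 := (Gamma_pos_of_pos ha).ne'
  calc _ = -(Gamma (b + 1))⁻¹ * ∫ t in Ioi 0, t ^ (b + 1 - 1) *
          ((log t - deriv Gamma (b + 1) / Gamma (b + 1)) * exp (-(s * t))) := by
        rw [← integral_const_mul, add_sub_cancel_right]
        congr 1 with t
        rw [neg_mul s]
        ring
    _ = log s / s ^ (b + 1) := by
        rw [integral_rpow_mul_log_sub_mul_exp_neg_mul_Ioi ha hs]
        field_simp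
        ring
end

section
/- For s > 0, ∫₀^∞ e^(−s t) · (−ln t − γ) dt = ln(s)/s, where γ is the Euler–Mascheroni constant. -/
/-!
Substituting `u = s t` turns the integral into `s⁻¹ ∫₀^∞ e^{-u} (log s - log u - γ) du`, and
`∫₀^∞ e^{-u} log u du` is the derivative of Euler's integral `Γ(z) = ∫₀^∞ u^{z-1} e^{-u} du`
at `z = 1`, that is `Γ'(1) = -γ`.
-/

open MeasureTheory Real Set

theorem integral_exp_neg_mul_log_Ioi :
    ∫ t in Ioi (0 : ℝ), exp (-t) * log t = -eulerMascheroniConstant := by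
  have hGammaIntegral : HasDerivAt Complex.GammaIntegral (-(eulerMascheroniConstant : ℂ)) 1 := by
    refine Complex.hasDerivAt_Gamma_one.congr_of_eventuallyEq ?_
    filter_upwards [Complex.continuous_re.isOpen_preimage _ isOpen_Ioi |>.mem_nhds
      (by norm_num : (1 : ℂ) ∈ Complex.re ⁻¹' Ioi 0)] with z hz
    exact (Complex.Gamma_eq_integral hz).symm
  have hcomplex := (Complex.hasDerivAt_GammaIntegral (s := 1) (by norm_num)).unique hGammaIntegral
  simp only [sub_self, Complex.cpow_zero, one_mul, mul_comm (log _ : ℂ)] at hcomplex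
  exact_mod_cast hcomplex

theorem integrableOn_exp_neg_mul_log_Ioi :
    IntegrableOn (fun t : ℝ ↦ exp (-t) * log t) (Ioi 0) :=
  -- a non-integrable function would have Bochner integral `0`
  .of_integral_ne_zero <| by
    rw [integral_exp_neg_mul_log_Ioi]
    linarith [one_half_lt_eulerMascheroniConstant]

theorem stmt_13 (s : ℝ) (hs : 0 < s) :
    ∫ t in Set.Ioi (0:ℝ), Real.exp (-s * t) * (-Real.log t - Real.eulerMascheroniConstant)
      = Real.log s / s := by
  set γ := eulerMascheroniConstant
  set g : ℝ → ℝ := fun u ↦ exp (-u) * (log s - γ) - exp (-u) * log u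
  have hsubst : ∀ t ∈ Ioi (0 : ℝ), exp (-s * t) * (-log t - γ) = g (s * t) := by
    intro t ht
    simp only [g, log_mul hs.ne' (ne_of_gt ht), neg_mul]
    ring
  have hexp : IntegrableOn (fun u : ℝ ↦ exp (-u) * (log s - γ)) (Ioi 0) := by
    simpa only [neg_one_mul, IntegrableOn] using
      (exp_neg_integrableOn_Ioi 0 one_pos).mul_const (log s - γ)
  rw [setIntegral_congr_fun measurableSet_Ioi hsubst, integral_comp_mul_left_Ioi g 0 hs, mul_zero,
    integral_sub hexp integrableOn_exp_neg_mul_log_Ioi, integral_mul_const,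
    integral_exp_neg_Ioi_zero, integral_exp_neg_mul_log_Ioi, smul_eq_mul]
  field_simp
  ring
end

section
/- For s > 0 and a > 0, ∫₀^∞ e^(−s t) · t · e^(−a t²) dt = (s / (4√π · a^(3/2))) · ∫₀^∞ e^(−s²/(4 u a)) · u^(−3/2) · (1/(u+1)) du, as an instance of the implicit square formula with F(t) = e^(−t) whose Laplace transform is f(u) = 1/(u+1). -/
/-!
For an integrable `F` with Laplace transform `f u = ∫₀^∞ e^{-uz} F z dz`, exchanging the order of
integration turns the right-hand side into `∫₀^∞ F z ∫₀^∞ u^{-3/2} e^{-A/u - zu} du dz` with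
`A = s² / (4a)`. The inner integral equals `√(π/A) e^{-2√(Az)}`: the substitutions `u = t²` and
`u ↦ 1/u` reduce it to `∫₀^∞ e^{-B (t - c/t)²} dt`, which the Cauchy–Schlömilch substitution
`t ↦ t - c/t` turns into half a Gaussian integral. Finally `z = a t²` gives back the left-hand
side, since `2√(A a t²) = s t`. For `F z = e^{-z}` one has `f u = 1 / (u + 1)`.
-/

open MeasureTheory Real Set

section

variable {E : Type*} [NormedAddCommGroup E] [NormedSpace ℝ E]

lemma image_const_div_Ioi_zero {c : ℝ} (hc : 0 < c) : (fun t : ℝ => c / t) '' Ioi 0 = Ioi 0 := by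
  ext y
  refine ⟨?_, fun hy => ⟨c / y, div_pos hc hy, div_div_cancel₀ hc.ne'⟩⟩
  rintro ⟨t, ht, rfl⟩
  exact div_pos hc ht

lemma injOn_const_div_Ioi_zero {c : ℝ} (hc : 0 < c) : InjOn (fun t : ℝ => c / t) (Ioi 0) :=
  fun x _ y _ h => by simpa [div_div_cancel₀ hc.ne'] using congrArg (c / ·) h

lemma integral_Ioi_comp_const_div (g : ℝ → E) {c : ℝ} (hc : 0 < c) :
    ∫ t in Ioi 0, (c / t ^ 2) • g (c / t) = ∫ t in Ioi 0, g t := by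
  have hderiv : ∀ t ∈ Ioi (0:ℝ), HasDerivWithinAt (fun t => c / t) (-(c / t ^ 2)) (Ioi 0) t :=
    fun t ht => by
      simpa [div_eq_mul_inv] using ((hasDerivAt_inv (ne_of_gt ht)).const_mul c).hasDerivWithinAt
  conv_rhs => rw [← image_const_div_Ioi_zero hc, integral_image_eq_integral_abs_deriv_smul
    measurableSet_Ioi hderiv (injOn_const_div_Ioi_zero hc)]
  refine setIntegral_congr_fun measurableSet_Ioi fun t ht => ?_
  rw [abs_neg, abs_of_pos (by have : (0:ℝ) < t := ht; positivity)]

lemma integral_Ioi_comp_mul_sq (g : ℝ → E) {a : ℝ} (ha : 0 < a) :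
    ∫ t in Ioi 0, (2 * a * t) • g (a * t ^ 2) = ∫ z in Ioi 0, g z := by
  have := integral_comp_mul_left_Ioi' g 0 ha
  rw [mul_zero] at this
  rw [← this, ← integral_smul,
    ← integral_comp_rpow_Ioi_of_pos (g := fun z => a • g (a * z)) two_pos]
  refine setIntegral_congr_fun measurableSet_Ioi fun t _ => ?_
  simp only [smul_smul, rpow_two]
  norm_num
  ring_nf

lemma image_sub_const_div_Ioi_zero {c : ℝ} (hc : 0 < c) :
    (fun t : ℝ => t - c / t) '' Ioi 0 = univ := by
  refine eq_univ_of_forall fun y => ?_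
  obtain ⟨r, hyr, hr⟩ : ∃ r, |y| < r ∧ r ^ 2 = y ^ 2 + 4 * c :=
    ⟨√(y ^ 2 + 4 * c), by rw [← sqrt_sq_eq_abs]; exact sqrt_lt_sqrt (sq_nonneg y) (by linarith),
      sq_sqrt (by positivity)⟩
  have ht : 0 < y + r := by linarith [neg_abs_le y]
  -- the positive root of `t ^ 2 - y * t - c`
  refine ⟨(y + r) / 2, half_pos ht, ?_⟩
  field_simp
  linear_combination hr

lemma hasDerivAt_sub_const_div (c : ℝ) {t : ℝ} (ht : t ≠ 0) :
    HasDerivAt (fun t : ℝ => t - c / t) (1 + c / t ^ 2) t := by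
  have := (hasDerivAt_id' t).sub ((hasDerivAt_inv ht).const_mul c)
  simp only [← div_eq_mul_inv] at this
  exact this.congr_deriv (by ring)

lemma strictMonoOn_sub_const_div {c : ℝ} (hc : 0 < c) :
    StrictMonoOn (fun t : ℝ => t - c / t) (Ioi 0) := fun x hx y _ hxy => by
  have : c / y < c / x := div_lt_div_of_pos_left hc hx hxy
  dsimp only
  linarith

lemma integral_Ioi_comp_sub_const_div {f : ℝ → E} (hf : Integrable f)
    (hf_even : ∀ x, f (-x) = f x) {c : ℝ} (hc : 0 < c) :
    ∫ t in Ioi 0, f (t - c / t) = (2:ℝ)⁻¹ • ∫ x, f x := by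
  have hderiv : ∀ t ∈ Ioi (0:ℝ),
      HasDerivWithinAt (fun t => t - c / t) (1 + c / t ^ 2) (Ioi 0) t :=
    fun t ht => (hasDerivAt_sub_const_div c (ne_of_gt ht)).hasDerivWithinAt
  have hinj := (strictMonoOn_sub_const_div hc).injOn
  have habs : ∀ t ∈ Ioi (0:ℝ), |1 + c / t ^ 2| = 1 + c / t ^ 2 := fun t _ =>
    abs_of_pos (by positivity)
  have hweighted : IntegrableOn (fun t => (1 + c / t ^ 2) • f (t - c / t)) (Ioi 0) := by
    refine ((integrableOn_image_iff_integrableOn_abs_deriv_smul measurableSet_Ioi hderiv hinj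
      f).1 ?_).congr_fun (fun t ht => by dsimp only; rw [habs t ht]) measurableSet_Ioi
    rw [image_sub_const_div_Ioi_zero hc]
    exact hf.integrableOn
  have hsub : ∫ x, f x = ∫ t in Ioi 0, (1 + c / t ^ 2) • f (t - c / t) := by
    rw [← setIntegral_univ, ← image_sub_const_div_Ioi_zero hc,
      integral_image_eq_integral_abs_deriv_smul measurableSet_Ioi hderiv hinj]
    exact setIntegral_congr_fun measurableSet_Ioi fun t ht => by rw [habs t ht]
  have hint : IntegrableOn (fun t => f (t - c / t)) (Ioi 0) := by
    -- the bounded factor `t² / (t² + c)` cancels the weight `1 + c / t²`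
    have hmeas : Measurable fun t : ℝ => t ^ 2 / (t ^ 2 + c) := by fun_prop
    refine IntegrableOn.congr_fun (hweighted.bdd_smul 1 hmeas.aestronglyMeasurable ?_)
      (fun t ht => ?_) measurableSet_Ioi
    · refine ae_of_all _ fun t => ?_
      rw [norm_div, norm_of_nonneg (by positivity), norm_of_nonneg (by positivity)]
      exact div_le_one_of_le₀ (by linarith) (by positivity)
    · have : (0:ℝ) < t := ht
      rw [Pi.smul_apply', smul_smul]
      conv_rhs => rw [← one_smul ℝ (f (t - c / t))]
      congr 1
      field_simp
  have hsym : ∫ t in Ioi 0, (c / t ^ 2) • f (t - c / t) = ∫ t in Ioi 0, f (t - c / t) := by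
    rw [← integral_Ioi_comp_const_div (fun t => f (t - c / t)) hc]
    refine setIntegral_congr_fun measurableSet_Ioi fun t ht => ?_
    rw [div_div_cancel₀ hc.ne', ← hf_even, neg_sub]
  have hsplit : ∫ t in Ioi 0, (1 + c / t ^ 2) • f (t - c / t)
      = (∫ t in Ioi 0, f (t - c / t)) + ∫ t in Ioi 0, (c / t ^ 2) • f (t - c / t) := by
    rw [← integral_add hint ((hweighted.sub hint).congr_fun (fun t _ => by
      simp only [Pi.sub_apply, add_smul, one_smul, add_sub_cancel_left]) measurableSet_Ioi)]
    simp only [add_smul, one_smul]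
  rw [hsub, hsplit, hsym, ← two_smul ℝ, smul_smul, inv_mul_cancel₀ two_ne_zero, one_smul]

lemma integral_Ioi_exp_neg_mul_sub_const_div_sq {b c : ℝ} (hb : 0 < b) (hc : 0 < c) :
    ∫ t in Ioi 0, exp (-b * (t - c / t) ^ 2) = √(π / b) / 2 := by
  rw [integral_Ioi_comp_sub_const_div (f := fun x => exp (-b * x ^ 2))
    (integrable_exp_neg_mul_sq hb) (fun x => by simp) hc, integral_gaussian, smul_eq_mul]
  ring

lemma integral_rpow_neg_half_mul_exp_neg_div_sub_mul {A B : ℝ} (hA : 0 < A) (hB : 0 < B) :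
    ∫ u in Ioi 0, u ^ (-(1:ℝ) / 2) * exp (-(A / u) - B * u)
      = √(π / B) * exp (-(2 * √(A * B))) := by
  set c := √(A / B)
  have hc : 0 < c := by positivity
  have hBc2 : B * c ^ 2 = A := by
    rw [sq_sqrt (by positivity)]
    field_simp
  have hBc : B * c = √(A * B) := by
    rw [show A * B = B ^ 2 * (A / B) by field_simp, sqrt_mul (sq_nonneg B), sqrt_sq hB.le]
  -- completing the square: `A / t² + B t² = B (t - c / t)² + 2 √(A B)`
  have hsquare : ∀ t : ℝ, t ≠ 0 →
      -(A / t ^ 2) - B * t ^ 2 = -B * (t - c / t) ^ 2 + -(2 * √(A * B)) := by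
    intro t ht
    rw [← hBc, ← hBc2]
    field_simp
    ring
  rw [← integral_Ioi_comp_mul_sq _ one_pos]
  have hintegrand : ∀ t ∈ Ioi (0:ℝ),
      (2 * 1 * t) • ((1 * t ^ 2) ^ (-(1:ℝ) / 2) * exp (-(A / (1 * t ^ 2)) - B * (1 * t ^ 2)))
        = 2 * exp (-(2 * √(A * B))) * exp (-B * (t - c / t) ^ 2) := by
    intro t ht
    have ht : 0 < t := ht
    have hpow : (t ^ 2 : ℝ) ^ (-(1:ℝ) / 2) = t⁻¹ := by
      rw [← rpow_natCast, ← rpow_mul ht.le]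
      norm_num
      exact rpow_neg_one t
    rw [one_mul, hpow, hsquare t ht.ne', exp_add, smul_eq_mul]
    field_simp
  rw [setIntegral_congr_fun measurableSet_Ioi hintegrand, integral_const_mul,
    integral_Ioi_exp_neg_mul_sub_const_div_sq hB hc]
  ring

lemma integral_rpow_neg_three_half_mul_exp_neg_div_sub_mul {A B : ℝ} (hA : 0 < A) (hB : 0 < B) :
    ∫ u in Ioi 0, u ^ (-(3:ℝ) / 2) * exp (-(A / u) - B * u)
      = √(π / A) * exp (-(2 * √(A * B))) := by
  rw [mul_comm A B, ← integral_rpow_neg_half_mul_exp_neg_div_sub_mul hB hA,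
    ← integral_comp_rpow_Ioi (fun u => u ^ (-(1:ℝ) / 2) * exp (-(B / u) - A * u))
      (neg_ne_zero.2 one_ne_zero)]
  refine setIntegral_congr_fun measurableSet_Ioi fun u hu => ?_
  have hu : 0 < u := hu
  rw [rpow_neg_one, inv_rpow hu.le, ← rpow_neg hu.le, smul_eq_mul, ← mul_assoc, abs_neg, abs_one,
    one_mul, ← rpow_add hu, div_inv_eq_mul, ← div_eq_mul_inv]
  congr 1
  · norm_num
  · ring_nf

lemma integrableOn_rpow_neg_three_half_mul_exp_neg_div {A : ℝ} (hA : 0 < A) :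
    IntegrableOn (fun u : ℝ => u ^ (-(3:ℝ) / 2) * exp (-(A / u))) (Ioi 0) := by
  have := (integrableOn_Ioi_comp_rpow_iff' _ (neg_ne_zero.2 one_ne_zero)).2
    (integrableOn_rpow_mul_exp_neg_mul_rpow (s := -(1:ℝ) / 2) (by norm_num) one_pos hA)
  refine this.congr_fun (fun u hu => ?_) measurableSet_Ioi
  have hu : 0 < u := hu
  dsimp only
  rw [rpow_neg_one, inv_rpow hu.le, ← rpow_neg hu.le, rpow_one, smul_eq_mul, ← mul_assoc,
    ← rpow_add hu, ← div_eq_mul_inv]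
  congr 1 <;> norm_num [neg_div]

lemma integrable_rpow_mul_exp_neg_div_sub_mul_smul {F : ℝ → E} (hF : IntegrableOn F (Ioi 0))
    {A : ℝ} (hA : 0 < A) :
    Integrable (Function.uncurry fun u z => (u ^ (-(3:ℝ) / 2) * exp (-(A / u) - z * u)) • F z)
      ((volume.restrict (Ioi 0)).prod (volume.restrict (Ioi 0))) := by
  have hmeas : Measurable fun p : ℝ × ℝ => p.1 ^ (-(3:ℝ) / 2) * exp (-(A / p.1) - p.2 * p.1) := by
    fun_prop
  refine ((integrableOn_rpow_neg_three_half_mul_exp_neg_div hA).mul_prod hF.norm).mono'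
    (hmeas.aestronglyMeasurable.smul hF.aestronglyMeasurable.comp_snd) ?_
  rw [Measure.prod_restrict]
  filter_upwards [ae_restrict_mem (measurableSet_Ioi.prod measurableSet_Ioi)]
    with ⟨u, z⟩ ⟨hu, hz⟩
  have hu : 0 < u := hu
  have hz : 0 < z := hz
  rw [Function.uncurry_apply_pair, norm_smul, norm_of_nonneg (by positivity)]
  gcongr
  nlinarith

lemma two_mul_mul_sqrt_pi_div_eq {a s : ℝ} (ha : 0 < a) (hs : 0 < s) :
    2 * a * √(π / (s ^ 2 / (4 * a))) = 4 * √π * a ^ ((3:ℝ) / 2) / s := by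
  have h32 : a ^ ((3:ℝ) / 2) = a * √a := by
    rw [show (3:ℝ) / 2 = 1 + 1 / 2 by norm_num, rpow_add ha, rpow_one, sqrt_eq_rpow]
  rw [show s ^ 2 / (4 * a) = (s / (2 * √a)) ^ 2 by rw [div_pow, mul_pow, sq_sqrt ha.le]; ring,
    sqrt_div pi_pos.le, sqrt_sq (by positivity), h32]
  field_simp
  norm_num

theorem integral_exp_neg_mul_mul_smul_comp_mul_sq [CompleteSpace E] {F : ℝ → E}
    (hF : IntegrableOn F (Ioi 0)) {a s : ℝ} (ha : 0 < a) (hs : 0 < s) :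
    ∫ t in Ioi 0, (exp (-s * t) * t) • F (a * t ^ 2)
      = (s / (4 * √π * a ^ ((3:ℝ) / 2))) •
        ∫ u in Ioi 0, (exp (-s ^ 2 / (4 * u * a)) * u ^ (-(3:ℝ) / 2)) •
          ∫ z in Ioi 0, exp (-u * z) • F z := by
  set A := s ^ 2 / (4 * a) with hA_def
  have hA : 0 < A := by positivity
  have hfubini : ∫ u in Ioi 0, (exp (-s ^ 2 / (4 * u * a)) * u ^ (-(3:ℝ) / 2)) •
        ∫ z in Ioi 0, exp (-u * z) • F z
      = ∫ z in Ioi 0, ∫ u in Ioi 0, (u ^ (-(3:ℝ) / 2) * exp (-(A / u) - z * u)) • F z := by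
    rw [← integral_integral_swap (integrable_rpow_mul_exp_neg_div_sub_mul_smul hF hA)]
    refine setIntegral_congr_fun measurableSet_Ioi fun u hu => ?_
    rw [← integral_smul]
    refine integral_congr_ae (ae_of_all _ fun z => ?_)
    have hu : 0 < u := hu
    have hexp : exp (-s ^ 2 / (4 * u * a)) * exp (-u * z) = exp (-(A / u) - z * u) := by
      rw [← exp_add, hA_def]
      congr 1
      field_simp
      ring
    dsimp only
    rw [smul_smul, ← hexp]
    congr 1
    ring
  have hinner : ∀ z ∈ Ioi (0:ℝ),
      ∫ u in Ioi 0, (u ^ (-(3:ℝ) / 2) * exp (-(A / u) - z * u)) • F z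
        = (√(π / A) * exp (-(2 * √(A * z)))) • F z := fun z hz => by
    rw [integral_smul_const, integral_rpow_neg_three_half_mul_exp_neg_div_sub_mul hA hz]
  have hsubst : ∫ z in Ioi 0, (√(π / A) * exp (-(2 * √(A * z)))) • F z
      = (2 * a * √(π / A)) • ∫ t in Ioi 0, (exp (-s * t) * t) • F (a * t ^ 2) := by
    rw [← integral_Ioi_comp_mul_sq _ ha, ← integral_smul]
    refine setIntegral_congr_fun measurableSet_Ioi fun t ht => ?_
    have ht : 0 < t := ht
    have hroot : √(A * (a * t ^ 2)) = s * t / 2 := by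
      rw [show A * (a * t ^ 2) = (s * t / 2) ^ 2 by rw [hA_def]; field_simp; ring,
        sqrt_sq (by positivity)]
    rw [smul_smul, smul_smul, hroot]
    congr 1
    ring_nf
  rw [hfubini, setIntegral_congr_fun measurableSet_Ioi hinner, hsubst, smul_smul,
    two_mul_mul_sqrt_pi_div_eq ha hs, div_mul_div_comm, mul_comm s, div_self (by positivity),
    one_smul]

end

lemma integral_exp_neg_mul_mul_exp_neg {u : ℝ} (hu : -1 < u) :
    ∫ z in Ioi 0, exp (-u * z) * exp (-z) = 1 / (u + 1) := by
  simp_rw [← exp_add, show ∀ z, -u * z + -z = -(u + 1) * z by intro z; ring]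
  rw [integral_exp_mul_Ioi (by linarith), mul_zero, exp_zero]
  field_simp

theorem stmt_18 (a s : ℝ) (ha : 0 < a) (hs : 0 < s) :
    ∫ t in Set.Ioi (0:ℝ), Real.exp (-s * t) * t * Real.exp (-a * t ^ 2)
      = (s / (4 * Real.sqrt π * a ^ ((3:ℝ)/2))) *
        ∫ u in Set.Ioi (0:ℝ), Real.exp (-s ^ 2 / (4 * u * a)) * u ^ (-(3:ℝ)/2)
          * (1 / (u + 1)) := by
  have h := integral_exp_neg_mul_mul_smul_comp_mul_sq (integrableOn_exp_neg_Ioi 0) ha hs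
  simp only [smul_eq_mul, ← neg_mul] at h
  rw [h]
  congr 1
  refine setIntegral_congr_fun measurableSet_Ioi fun u hu => ?_
  rw [integral_exp_neg_mul_mul_exp_neg (by linarith [mem_Ioi.mp hu])]
end
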